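/- Suppose p₀ has support contained in the closed ball of radius R > 0 centered at the origin. Then for every x₀ in the support of p₀, ∫_{ℝ^d} p_t(x_t∣x₀)² / p_t(x_t) dx_t ≤ 2^{d/2} exp(19 ᾱ R² / (2(1−ᾱ))). -/

import Mathlib

/-!
Since `p₀` lives in the ball of radius `R`, every kernel `p_t(x_t ∣ y)` with `y` in its support
is at least `C exp(-(‖x_t‖ + √ᾱ R)² / (2(1-ᾱ)))`, where `C = (2π(1-ᾱ))^{-d/2}`, and so is the
marginal. With `a = √ᾱ x₀` and `s = √ᾱ R ≥ ‖a‖`, the identity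
`4‖x - a‖² + 18 s² - ‖x - 4a‖² - 2(‖x‖ + s)² = (‖x‖ - 2s)² + 12 (s² - ‖a‖²)`
then bounds `p_t(x_t ∣ x₀)² / p_t(x_t)` by `C exp(9 ᾱ R² / (2(1-ᾱ)))` times an unnormalised
Gaussian of variance `2(1-ᾱ)` centred at `4a`, whose integral is `(4π(1-ᾱ))^{d/2}`. This gives
the bound with `9` in place of `19`.
-/

open MeasureTheory Real

/-- Forward Gaussian kernel `p_t(x_t | x_0)` with noise level `ᾱ = α`. -/
noncomputable def gaussKer (d : ℕ) (α : ℝ) (x0 xt : EuclideanSpace ℝ (Fin d)) : ℝ :=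
  (2 * π * (1 - α)) ^ (-(d : ℝ) / 2) *
    Real.exp (-‖xt - (Real.sqrt α) • x0‖ ^ 2 / (2 * (1 - α)))

/-- Marginal density `p_t(x_t) = ∫ p_t(x_t|x_0) p_0(x_0) dx_0`. -/
noncomputable def marginal (d : ℕ) (α : ℝ) (p0 : EuclideanSpace ℝ (Fin d) → ℝ)
    (xt : EuclideanSpace ℝ (Fin d)) : ℝ :=
  ∫ x0, gaussKer d α x0 xt * p0 x0

/-- Posterior density `p_t(x_0 | x_t) = p_t(x_t|x_0) p_0(x_0) / p_t(x_t)`. -/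
noncomputable def posterior (d : ℕ) (α : ℝ) (p0 : EuclideanSpace ℝ (Fin d) → ℝ)
    (x0 xt : EuclideanSpace ℝ (Fin d)) : ℝ :=
  gaussKer d α x0 xt * p0 x0 / marginal d α p0 xt

/-- Backward operator `(T_t f)(x_t) = ∫ f(x_0) p_t(x_0|x_t) dx_0`. -/
noncomputable def Tt (d : ℕ) (α : ℝ) (p0 : EuclideanSpace ℝ (Fin d) → ℝ)
    (f : EuclideanSpace ℝ (Fin d) → ℝ) (xt : EuclideanSpace ℝ (Fin d)) : ℝ :=
  ∫ x0, f x0 * posterior d α p0 x0 xt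

/-- Forward (adjoint) operator `(T_t⋆ g)(x_0) = ∫ g(x_t) p_t(x_t|x_0) dx_t`. -/
noncomputable def TtStar (d : ℕ) (α : ℝ) (p0 : EuclideanSpace ℝ (Fin d) → ℝ)
    (g : EuclideanSpace ℝ (Fin d) → ℝ) (x0 : EuclideanSpace ℝ (Fin d)) : ℝ :=
  ∫ xt, g xt * gaussKer d α x0 xt

section InnerProductSpace

variable {V : Type*} [NormedAddCommGroup V] [InnerProductSpace ℝ V]

theorem norm_sub_four_smul_sq_add_le {x a : V} {s : ℝ} (ha : ‖a‖ ≤ s) :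
    ‖x - (4 : ℝ) • a‖ ^ 2 + 2 * (‖x‖ + s) ^ 2 ≤ 4 * ‖x - a‖ ^ 2 + 18 * s ^ 2 := by
  have h4 : ‖x - (4 : ℝ) • a‖ ^ 2 = ‖x‖ ^ 2 - 8 * inner ℝ x a + 16 * ‖a‖ ^ 2 := by
    rw [norm_sub_sq_real, real_inner_smul_right, norm_smul, Real.norm_eq_abs]
    ring_nf
  rw [h4, norm_sub_sq_real]
  nlinarith [sq_nonneg (‖x‖ - 2 * s), norm_nonneg a]

variable [FiniteDimensional ℝ V] [MeasurableSpace V] [BorelSpace V]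

theorem integral_rexp_neg_mul_sq_norm_sub {b : ℝ} (hb : 0 < b) (c : V) :
    ∫ v : V, rexp (-b * ‖v - c‖ ^ 2) = (π / b) ^ (Module.finrank ℝ V / 2 : ℝ) := by
  rw [integral_sub_right_eq_self (fun v => rexp (-b * ‖v‖ ^ 2)) c,
    GaussianFourier.integral_rexp_neg_mul_sq_norm hb]

theorem integrable_rexp_neg_mul_sq_norm_sub {b : ℝ} (hb : 0 < b) (c : V) :
    Integrable fun v : V => rexp (-b * ‖v - c‖ ^ 2) :=
  Integrable.of_integral_ne_zero <| by
    rw [integral_rexp_neg_mul_sq_norm_sub hb c]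
    positivity

end InnerProductSpace

theorem le_integral_mul_of_forall_mem_support {X : Type*} [MeasurableSpace X] {μ : Measure X}
    {f p : X → ℝ} {m : ℝ} (hp1 : ∫ x, p x ∂μ = 1) (hfp : Integrable (fun x => f x * p x) μ)
    (hp : ∀ x, 0 ≤ p x) (hm : ∀ x ∈ Function.support p, m ≤ f x) :
    m ≤ ∫ x, f x * p x ∂μ := by
  have hp_int : Integrable p μ := Integrable.of_integral_ne_zero (by simp [hp1])
  calc m = ∫ x, m * p x ∂μ := by rw [integral_const_mul, hp1, mul_one]
    _ ≤ ∫ x, f x * p x ∂μ := by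
      refine integral_mono (hp_int.const_mul m) hfp fun x => ?_
      by_cases hx : p x = 0
      · simp [hx]
      · exact mul_le_mul_of_nonneg_right (hm x hx) (hp x)

section GaussKer

variable {d : ℕ} {α : ℝ}

theorem gaussKer_pos (hα : α < 1) (x0 x : EuclideanSpace ℝ (Fin d)) :
    0 < gaussKer d α x0 x := by
  have : 0 < 1 - α := by linarith
  unfold gaussKer
  positivity

theorem gaussKer_le (hα : α < 1) (x0 x : EuclideanSpace ℝ (Fin d)) :
    gaussKer d α x0 x ≤ (2 * π * (1 - α)) ^ (-(d : ℝ) / 2) := by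
  have : 0 < 1 - α := by linarith
  refine mul_le_of_le_one_right (by positivity) (exp_le_one_iff.mpr ?_)
  exact div_nonpos_of_nonpos_of_nonneg (neg_nonpos.mpr (by positivity)) (by positivity)

theorem continuous_gaussKer_left (x : EuclideanSpace ℝ (Fin d)) :
    Continuous fun x0 => gaussKer d α x0 x := by
  unfold gaussKer
  fun_prop

theorem integrable_gaussKer_mul {p0 : EuclideanSpace ℝ (Fin d) → ℝ} (hp0 : Integrable p0)
    (hα : α < 1) (x : EuclideanSpace ℝ (Fin d)) :
    Integrable fun x0 => gaussKer d α x0 x * p0 x0 :=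
  hp0.bdd_mul (continuous_gaussKer_left x).aestronglyMeasurable <|
    .of_forall fun x0 => by
      rw [Real.norm_of_nonneg (gaussKer_pos hα x0 x).le]
      exact gaussKer_le hα x0 x

variable {p0 : EuclideanSpace ℝ (Fin d) → ℝ} {R : ℝ}

theorem le_marginal (hα : α < 1) (hp0 : ∀ x, 0 ≤ p0 x) (hp01 : ∫ x, p0 x = 1)
    (hsupp : Function.support p0 ⊆ Metric.closedBall 0 R) (x : EuclideanSpace ℝ (Fin d)) :
    (2 * π * (1 - α)) ^ (-(d : ℝ) / 2) * rexp (-(‖x‖ + √α * R) ^ 2 / (2 * (1 - α)))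
      ≤ marginal d α p0 x := by
  have hp0_int : Integrable p0 := Integrable.of_integral_ne_zero (by simp [hp01])
  refine le_integral_mul_of_forall_mem_support hp01 (integrable_gaussKer_mul hp0_int hα x) hp0
    fun y hy => ?_
  have hyR : ‖y‖ ≤ R := by simpa using hsupp hy
  have hdist : ‖x - √α • y‖ ≤ ‖x‖ + √α * R := calc
    ‖x - √α • y‖ ≤ ‖x‖ + √α * ‖y‖ := by
      simpa [norm_smul, abs_of_nonneg (sqrt_nonneg α)] using norm_sub_le x (√α • y)
    _ ≤ ‖x‖ + √α * R := by gcongr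
  have : 0 < 1 - α := by linarith
  unfold gaussKer
  gcongr

theorem marginal_pos (hα : α < 1) (hp0 : ∀ x, 0 ≤ p0 x) (hp01 : ∫ x, p0 x = 1)
    (hsupp : Function.support p0 ⊆ Metric.closedBall 0 R) (x : EuclideanSpace ℝ (Fin d)) :
    0 < marginal d α p0 x := by
  have : 0 < 1 - α := by linarith
  exact lt_of_lt_of_le (by positivity) (le_marginal hα hp0 hp01 hsupp x)

theorem gaussKer_sq_div_marginal_le (hα : α ∈ Set.Ioo 0 1) (hp0 : ∀ x, 0 ≤ p0 x)
    (hp01 : ∫ x, p0 x = 1) (hsupp : Function.support p0 ⊆ Metric.closedBall 0 R)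
    {x0 : EuclideanSpace ℝ (Fin d)} (hx0 : ‖x0‖ ≤ R) (x : EuclideanSpace ℝ (Fin d)) :
    gaussKer d α x0 x ^ 2 / marginal d α p0 x
      ≤ (2 * π * (1 - α)) ^ (-(d : ℝ) / 2) * rexp (9 * α * R ^ 2 / (2 * (1 - α)))
        * rexp (-(4 * (1 - α))⁻¹ * ‖x - (4 : ℝ) • (√α • x0)‖ ^ 2) := by
  obtain ⟨hα0, hα1⟩ := hα
  have hv : 0 < 1 - α := by linarith
  set C := (2 * π * (1 - α)) ^ (-(d : ℝ) / 2)
  set s := √α * R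
  set a := √α • x0
  have ha : ‖a‖ ≤ s := by
    simpa [a, s, norm_smul, abs_of_nonneg (sqrt_nonneg α)] using
      mul_le_mul_of_nonneg_left hx0 (sqrt_nonneg α)
  have hs : 9 * α * R ^ 2 = 9 * s ^ 2 := by rw [mul_pow, sq_sqrt hα0.le]; ring
  have hexp : -‖x - a‖ ^ 2 / (2 * (1 - α)) + -‖x - a‖ ^ 2 / (2 * (1 - α))
      ≤ 9 * s ^ 2 / (2 * (1 - α)) + -(4 * (1 - α))⁻¹ * ‖x - (4 : ℝ) • a‖ ^ 2
        + -(‖x‖ + s) ^ 2 / (2 * (1 - α)) := by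
    have key := norm_sub_four_smul_sq_add_le (x := x) ha
    rw [← sub_nonpos]
    have : (4 * (1 - α)) * (-‖x - a‖ ^ 2 / (2 * (1 - α)) + -‖x - a‖ ^ 2 / (2 * (1 - α))
        - (9 * s ^ 2 / (2 * (1 - α)) + -(4 * (1 - α))⁻¹ * ‖x - (4 : ℝ) • a‖ ^ 2
          + -(‖x‖ + s) ^ 2 / (2 * (1 - α))))
        = ‖x - (4 : ℝ) • a‖ ^ 2 + 2 * (‖x‖ + s) ^ 2 - (4 * ‖x - a‖ ^ 2 + 18 * s ^ 2) := by
      field_simp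
      ring
    nlinarith
  rw [div_le_iff₀ (marginal_pos hα1 hp0 hp01 hsupp x), hs]
  calc gaussKer d α x0 x ^ 2
      = C ^ 2 * rexp (-‖x - a‖ ^ 2 / (2 * (1 - α)) + -‖x - a‖ ^ 2 / (2 * (1 - α))) := by
        rw [gaussKer, mul_pow, exp_add, ← sq]
    _ ≤ C ^ 2 * rexp (9 * s ^ 2 / (2 * (1 - α)) + -(4 * (1 - α))⁻¹ * ‖x - (4 : ℝ) • a‖ ^ 2
        + -(‖x‖ + s) ^ 2 / (2 * (1 - α))) := by gcongr
    _ = C * rexp (9 * s ^ 2 / (2 * (1 - α))) * rexp (-(4 * (1 - α))⁻¹ * ‖x - (4 : ℝ) • a‖ ^ 2)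
        * (C * rexp (-(‖x‖ + s) ^ 2 / (2 * (1 - α)))) := by
        rw [exp_add, exp_add]; ring
    _ ≤ _ := by
      gcongr
      exact le_marginal hα1 hp0 hp01 hsupp x

end GaussKer

theorem two_pi_mul_rpow_neg_mul_rpow {v : ℝ} (hv : 0 < v) (t : ℝ) :
    (2 * π * v) ^ (-t) * (π / (4 * v)⁻¹) ^ t = 2 ^ t := by
  rw [div_inv_eq_mul, show π * (4 * v) = 2 * (2 * π * v) by ring,
    mul_rpow zero_le_two (by positivity), rpow_neg (by positivity)]
  field_simp

theorem ratio_integral_bound_general (d : ℕ) (α : ℝ) (hα : α ∈ Set.Ioo (0:ℝ) 1)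
    (p0 : EuclideanSpace ℝ (Fin d) → ℝ)
    (hp0 : ∀ x, 0 ≤ p0 x) (hp01 : ∫ x, p0 x = 1)
    (R : ℝ)
    (hsupp : Function.support p0 ⊆ Metric.closedBall 0 R) :
    ∀ x0 ∈ tsupport p0,
      (∫ xt, gaussKer d α x0 xt ^ 2 / marginal d α p0 xt)
        ≤ (2 : ℝ) ^ ((d : ℝ) / 2) * Real.exp (19 * α * R ^ 2 / (2 * (1 - α))) := by
  intro x0 hx0
  have hx0R : ‖x0‖ ≤ R := by simpa using closure_minimal hsupp Metric.isClosed_closedBall hx0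
  have hv : 0 < 1 - α := by linarith [hα.2]
  set K := (2 * π * (1 - α)) ^ (-(d : ℝ) / 2) * rexp (9 * α * R ^ 2 / (2 * (1 - α)))
  calc (∫ xt, gaussKer d α x0 xt ^ 2 / marginal d α p0 xt)
      ≤ ∫ xt, K * rexp (-(4 * (1 - α))⁻¹ * ‖xt - (4 : ℝ) • (√α • x0)‖ ^ 2) :=
        integral_mono_of_nonneg
          (.of_forall fun xt => div_nonneg (sq_nonneg _)
            (marginal_pos hα.2 hp0 hp01 hsupp xt).le)
          ((integrable_rexp_neg_mul_sq_norm_sub (by positivity) _).const_mul K)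
          (.of_forall (gaussKer_sq_div_marginal_le hα hp0 hp01 hsupp hx0R))
    _ = 2 ^ ((d : ℝ) / 2) * rexp (9 * α * R ^ 2 / (2 * (1 - α))) := by
      rw [integral_const_mul, integral_rexp_neg_mul_sq_norm_sub (by positivity),
        finrank_euclideanSpace_fin, mul_right_comm, neg_div, two_pi_mul_rpow_neg_mul_rpow hv]
    _ ≤ 2 ^ ((d : ℝ) / 2) * rexp (19 * α * R ^ 2 / (2 * (1 - α))) := by
      have := hα.1.le
      gcongr
      norm_num

/-- for `x₀` in the support of `p₀` (contained in the closed ball of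
radius `R`), the round-trip ratio integral is uniformly bounded. -/
theorem ratio_integral_bound (d : ℕ) (α : ℝ) (hα : α ∈ Set.Ioo (0:ℝ) 1)
    (p0 : EuclideanSpace ℝ (Fin d) → ℝ) (hp0m : Measurable p0)
    (hp0 : ∀ x, 0 ≤ p0 x) (hp01 : ∫ x, p0 x = 1)
    (R : ℝ) (hR : 0 < R)
    (hsupp : Function.support p0 ⊆ Metric.closedBall 0 R) :
    ∀ x0 ∈ tsupport p0,
      (∫ xt, gaussKer d α x0 xt ^ 2 / marginal d α p0 xt)
        ≤ (2 : ℝ) ^ ((d : ℝ) / 2) * Real.exp (19 * α * R ^ 2 / (2 * (1 - α))) :=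
  ratio_integral_bound_general d α hα p0 hp0 hp01 R hsupp
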